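/- arXiv:1107.3067 — 3 statements merged into one kernel-verified Lean document; each statement's English description precedes it below -/
import Mathlib

section
/- Let m ≥ 1 and N ≥ 1 be integers and α = 2m/(2m-1). There exists a constant C > 0 (one may take C = (2m-1)^{2m-1}) such that for every smooth compactly supported function w : (0,∞) → ℂ vanishing for r ≤ 1, one has ∫_0^∞ r^{N+1} |w(r)|² e^{-r^α} dr ≤ C ∫_0^∞ r^{N-1} |w^{(2m-1)}(r)|² e^{-r^α} dr. -/
open MeasureTheory Filter Complex

noncomputable section

/-- `ℝ^N`. -/
abbrev Sp (N : ℕ) : Type := EuclideanSpace ℝ (Fin N)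

/-- Partial derivative `∂/∂y_i`. -/
def pd {N : ℕ} (i : Fin N) (f : Sp N → ℂ) : Sp N → ℂ :=
  fun y => fderiv ℝ f y (EuclideanSpace.single i 1)

/-- The Laplacian `Δ = Σ_i ∂²/∂y_i²`. -/
def lap {N : ℕ} (f : Sp N → ℂ) : Sp N → ℂ :=
  fun y => ∑ i, pd i (pd i f) y

/-- The iterated negative Laplacian `(-Δ)^m`. -/
def negLapPow {N : ℕ} (m : ℕ) (f : Sp N → ℂ) : Sp N → ℂ :=
  (fun g : Sp N → ℂ => fun y => -(lap g y))^[m] f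

/-- The Euler operator `y · ∇`. -/
def euler {N : ℕ} (f : Sp N → ℂ) : Sp N → ℂ :=
  fun y => ∑ i, (y i : ℂ) * pd i f y

/-- The rescaled Schrödinger operator `B v = -i(-Δ)^m v + (1/2m) y·∇v + (N/2m) v`. -/
def Bop {N : ℕ} (m : ℕ) (f : Sp N → ℂ) : Sp N → ℂ :=
  fun y => -Complex.I * negLapPow m f y + (1/(2*(m:ℂ))) * euler f y
    + ((N:ℂ)/(2*(m:ℂ))) * f y

/-- The adjoint rescaled operator `B* v = -i(-Δ)^m v - (1/2m) y·∇v`. -/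
def Bstar {N : ℕ} (m : ℕ) (f : Sp N → ℂ) : Sp N → ℂ :=
  fun y => -Complex.I * negLapPow m f y - (1/(2*(m:ℂ))) * euler f y

/-- The multiindex derivative `D^β = ∂^{β₁}_{y₁} ⋯ ∂^{β_N}_{y_N}`. -/
def Dop {N : ℕ} (β : Fin N → ℕ) (f : Sp N → ℂ) : Sp N → ℂ :=
  ((List.ofFn fun i : Fin N => (pd i)^[β i]).foldr (· ∘ ·) id) f

/-- The weighted Sobolev integrand `Σ_{k=0}^{2m} |D^k v(y)|² = Σ_{|β| ≤ 2m} |D^β v(y)|²`. -/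
def sobSum {N : ℕ} (m : ℕ) (v : Sp N → ℂ) (y : Sp N) : ℝ :=
  ∑ k ∈ Finset.range (2*m+1), ∑ β ∈ Finset.Nat.antidiagonalTuple N k, ‖Dop β v y‖ ^ 2

/-- The weight `ρ(y) = exp(-|y|^α)`, `α = 2m/(2m-1)`. -/
def rho {N : ℕ} (m : ℕ) (y : Sp N) : ℝ :=
  Real.exp (-(‖y‖ ^ ((2*(m:ℝ))/(2*(m:ℝ)-1))))

/-- The weight `ρ*(y) = exp(|y|^α)`, `α = 2m/(2m-1)`. -/
def rhoStar {N : ℕ} (m : ℕ) (y : Sp N) : ℝ :=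
  Real.exp (‖y‖ ^ ((2*(m:ℝ))/(2*(m:ℝ)-1)))

section HardyAux

open Set intervalIntegral

lemma one_le_iy : (1 : WithTop ℕ∞) ≤ ((⊤:ℕ∞) : WithTop ℕ∞) := by exact_mod_cast le_top

/-- If a smooth function vanishes on `Iic 1`, so does its derivative. -/
lemma vanish_deriv {w : ℝ → ℂ} (hw : ContDiff ℝ (⊤:ℕ∞) w) (h0 : ∀ r : ℝ, r ≤ 1 → w r = 0) :
    ∀ r : ℝ, r ≤ 1 → deriv w r = 0 := by
  have hcont : Continuous (deriv w) := hw.continuous_deriv one_le_iy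
  have hIio : Set.EqOn (deriv w) 0 (Set.Iio 1) := by
    intro r hr
    have hev : w =ᶠ[nhds r] (fun _ => (0:ℂ)) := by
      filter_upwards [Iio_mem_nhds hr] with x hx using h0 x (le_of_lt hx)
    have := hev.deriv_eq
    simpa using this
  have hclo : Set.EqOn (deriv w) 0 (closure (Set.Iio (1:ℝ))) :=
    hIio.closure hcont continuous_const
  intro r hr
  have : r ∈ closure (Set.Iio (1:ℝ)) := by rwa [closure_Iio]
  exact hclo this

lemma iterate_deriv_props {w : ℝ → ℂ} (hw : ContDiff ℝ (⊤:ℕ∞) w)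
    (hsupp : HasCompactSupport w) (h0 : ∀ r : ℝ, r ≤ 1 → w r = 0) (k : ℕ) :
    ContDiff ℝ (⊤:ℕ∞) (deriv^[k] w) ∧ HasCompactSupport (deriv^[k] w) ∧
      (∀ r : ℝ, r ≤ 1 → deriv^[k] w r = 0) := by
  induction k with
  | zero => exact ⟨hw, hsupp, h0⟩
  | succ n ih =>
    obtain ⟨h1, h2, h3⟩ := ih
    refine ⟨?_, ?_, ?_⟩
    · rw [Function.iterate_succ_apply']
      exact (contDiff_infty_iff_deriv.mp h1).2
    · rw [Function.iterate_succ_apply']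
      exact h2.deriv
    · rw [Function.iterate_succ_apply']
      exact vanish_deriv h1 h3

set_option maxHeartbeats 1600000 in
/-- The one-step Hardy inequality with exponential weight `exp (-(r^α))`, `α > 1`. -/
lemma key_step (α : ℝ) (hα : 1 < α) (a : ℝ) :
    ∃ C : ℝ, 0 < C ∧ ∀ w : ℝ → ℂ, ContDiff ℝ (⊤:ℕ∞) w → HasCompactSupport w →
      (∀ r : ℝ, r ≤ 1 → w r = 0) →
      (∫ r in Set.Ioi (0:ℝ), r ^ a * ‖w r‖ ^ 2 * Real.exp (-(r ^ α))) ≤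
        C * ∫ r in Set.Ioi (0:ℝ),
          r ^ (a - 2*(α-1)) * ‖deriv w r‖ ^ 2 * Real.exp (-(r ^ α)) := by
  have hα0 : (0:ℝ) < α := by linarith
  set β : ℝ := a - α + 1 with hβ
  set a' : ℝ := a - 2*(α-1) with ha'
  set Q : ℝ := (2*|β|/α + 1) ^ (α⁻¹) with hQ
  set R : ℝ := max 2 Q with hRdef
  have hR2 : (2:ℝ) ≤ R := le_max_left _ _
  have hR1 : (1:ℝ) ≤ R := by linarith
  have hR0 : (0:ℝ) < R := by linarith
  -- the weight and auxiliary functions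
  set E : ℝ → ℝ := fun s => Real.exp (-(s ^ α)) with hE
  set f : ℝ → ℝ := fun s => s ^ a * E s with hf
  set φ : ℝ → ℝ := fun s => s ^ β * E s with hφ
  set Φ' : ℝ → ℝ := fun s => (β * s ^ (β-1) - α * s ^ a) * E s with hΦ'
  have hEpos : ∀ s : ℝ, 0 < E s := fun s => Real.exp_pos _
  have hfnonneg : ∀ s : ℝ, 0 ≤ s → 0 ≤ f s := by
    intro s hs; exact mul_nonneg (Real.rpow_nonneg hs a) (hEpos s).le
  have hφnonneg : ∀ s : ℝ, 0 ≤ s → 0 ≤ φ s := by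
    intro s hs; exact mul_nonneg (Real.rpow_nonneg hs β) (hEpos s).le
  -- continuity
  have hcO : ∀ c : ℝ, ContinuousOn (fun s : ℝ => s ^ c) (Set.Ioi 0) := by
    intro c s hs
    exact (Real.continuousAt_rpow_const s c (Or.inl (ne_of_gt hs))).continuousWithinAt
  have hEcO : ContinuousOn E (Set.Ioi 0) := ((hcO α).neg).rexp
  have hfcO : ∀ c : ℝ, ContinuousOn (fun s : ℝ => s ^ c * E s) (Set.Ioi 0) :=
    fun c => (hcO c).mul hEcO
  have hΦ'cO : ContinuousOn Φ' (Set.Ioi 0) := by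
    refine ContinuousOn.mul ?_ hEcO
    exact (((hcO (β-1)).const_smul β).sub ((hcO a).const_smul α))
  have hIccSub : ∀ x y : ℝ, 1 ≤ x → Set.uIcc x y ⊆ Set.Ioi (0:ℝ) ∨ True := fun _ _ _ => Or.inr trivial
  -- derivative of φ
  have hφderiv : ∀ s : ℝ, 0 < s → HasDerivAt φ (Φ' s) s := by
    intro s hs
    have h1 : HasDerivAt (fun x : ℝ => x ^ β) (β * s ^ (β-1)) s :=
      Real.hasDerivAt_rpow_const (Or.inl (ne_of_gt hs))
    have h2 : HasDerivAt (fun x : ℝ => -(x ^ α)) (-(α * s ^ (α-1))) s :=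
      (Real.hasDerivAt_rpow_const (Or.inl (ne_of_gt hs))).neg
    have h3 : HasDerivAt E (E s * (-(α * s ^ (α-1)))) s := h2.exp
    have h4 := h1.mul h3
    have hsum : s ^ β * s ^ (α-1) = s ^ a := by
      rw [← Real.rpow_add hs]; ring_nf; rw [hβ]; ring_nf
    have : β * s ^ (β-1) * E s + s ^ β * (E s * (-(α * s ^ (α-1)))) = Φ' s := by
      simp only [hΦ']
      rw [show s ^ β * (E s * (-(α * s ^ (α-1)))) = -(α * (s ^ β * s ^ (α-1))) * E s by ring,
        hsum]
      ring
    rw [← this]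
    exact h4
  -- choice of R: for s ≥ R, β ≤ (α/2) * s^α
  have hRbound : ∀ s : ℝ, R ≤ s → β ≤ α/2 * s ^ α := by
    intro s hsR
    have hs1 : (1:ℝ) ≤ s := le_trans hR1 hsR
    have hs0 : (0:ℝ) ≤ s := by linarith
    have hQ0 : (0:ℝ) ≤ 2*|β|/α + 1 := by positivity
    have hQα : Q ^ α = 2*|β|/α + 1 := by
      rw [hQ, ← Real.rpow_mul hQ0, inv_mul_cancel₀ (ne_of_gt hα0), Real.rpow_one]
    have hQR : Q ≤ s := le_trans (le_max_right 2 Q) hsR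
    have hQ0' : (0:ℝ) ≤ Q := Real.rpow_nonneg hQ0 _
    have hsα : 2*|β|/α + 1 ≤ s ^ α := by
      rw [← hQα]; exact Real.rpow_le_rpow hQ0' hQR hα0.le
    have habs : β ≤ |β| := le_abs_self β
    have h2 : 2*|β|/α ≤ s ^ α := by linarith
    calc β ≤ |β| := habs
      _ = α/2 * (2*|β|/α) := by field_simp
      _ ≤ α/2 * s ^ α := by
          apply mul_le_mul_of_nonneg_left h2; positivity
  -- pointwise comparison f ≤ -(2/α * Φ') for s ≥ R
  have hcompare : ∀ s : ℝ, R ≤ s → f s ≤ -((2/α) * Φ' s) := by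
    intro s hsR
    have hs0 : (0:ℝ) < s := lt_of_lt_of_le (by linarith) hsR
    have hsplit : s ^ (β - 1) * s ^ α = s ^ a := by
      rw [← Real.rpow_add hs0]; ring_nf; rw [hβ]; ring_nf
    have hkey : β * s ^ (β-1) ≤ α/2 * s ^ a := by
      have hpow : (0:ℝ) < s ^ (β-1) := Real.rpow_pos_of_pos hs0 _
      have := hRbound s hsR
      calc β * s ^ (β-1) ≤ (α/2 * s ^ α) * s ^ (β-1) := by
            apply mul_le_mul_of_nonneg_right this hpow.le
        _ = α/2 * s ^ a := by rw [mul_assoc, mul_comm (s ^ α), hsplit]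
    have : -((2/α) * Φ' s) = (2/α) * (α * s ^ a - β * s ^ (β-1)) * E s := by
      simp only [hΦ']; ring
    rw [this, hf]
    have hEp := (hEpos s).le
    have h1 : s ^ a ≤ (2/α) * (α * s ^ a - β * s ^ (β-1)) := by
      have h2 : α * s ^ a - β * s ^ (β-1) ≥ α/2 * s ^ a := by linarith
      calc s ^ a = (2/α) * (α/2 * s ^ a) := by field_simp
        _ ≤ (2/α) * (α * s ^ a - β * s ^ (β-1)) := by
            apply mul_le_mul_of_nonneg_left h2; positivity
    exact mul_le_mul_of_nonneg_right h1 hEp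
  -- tail estimate: for R ≤ r ≤ T, ∫ s in r..T, f s ≤ (2/α) * φ r
  have hIoisub : ∀ x y : ℝ, 1 ≤ x → x ≤ y → Set.uIcc x y ⊆ Set.Ioi (0:ℝ) := by
    intro x y hx hxy
    rw [Set.uIcc_of_le hxy]
    intro z hz
    exact lt_of_lt_of_le (by linarith : (0:ℝ) < x) hz.1
  have hfint : ∀ x y : ℝ, 1 ≤ x → x ≤ y → IntervalIntegrable f volume x y := by
    intro x y hx hxy
    exact ((hfcO a).mono (hIoisub x y hx hxy)).intervalIntegrable
  have htail : ∀ r T : ℝ, R ≤ r → r ≤ T → (∫ s in r..T, f s) ≤ (2/α) * φ r := by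
    intro r T hRr hrT
    have hr1 : (1:ℝ) ≤ r := le_trans hR1 hRr
    have hsub := hIoisub r T hr1 hrT
    have hFTC : (∫ s in r..T, Φ' s) = φ T - φ r := by
      apply integral_eq_sub_of_hasDerivAt
      · intro x hx
        have : (0:ℝ) < x := hsub hx
        exact hφderiv x this
      · exact (hΦ'cO.mono hsub).intervalIntegrable
    have hmono : (∫ s in r..T, f s) ≤ ∫ s in r..T, -((2/α) * Φ' s) := by
      apply integral_mono_on hrT (hfint r T hr1 hrT)
      · exact (((hΦ'cO.const_smul (2/α)).neg).mono hsub).intervalIntegrable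
      · intro x hx
        exact hcompare x (le_trans hRr hx.1)
    have heval : (∫ s in r..T, -((2/α) * Φ' s)) = (2/α) * (φ r - φ T) := by
      rw [intervalIntegral.integral_neg, intervalIntegral.integral_const_mul, hFTC]; ring
    have hφT : 0 ≤ φ T := hφnonneg T (by linarith)
    calc (∫ s in r..T, f s) ≤ (2/α) * (φ r - φ T) := by rw [← heval]; exact hmono
      _ ≤ (2/α) * φ r := by
          have h9 : 0 ≤ (2/α) * φ T := mul_nonneg (by positivity) hφT
          nlinarith [h9]
  -- constants
  set M : ℝ := (R-1) * R ^ |a| + (2/α) * φ R with hM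
  set c₀ : ℝ := min 1 (R ^ β) * Real.exp (-(R ^ α)) with hc₀
  have hc₀pos : 0 < c₀ := by
    apply mul_pos
    · exact lt_min one_pos (Real.rpow_pos_of_pos hR0 β)
    · exact Real.exp_pos _
  have hMnonneg : 0 ≤ M := by
    apply add_nonneg
    · apply mul_nonneg (by linarith) (Real.rpow_nonneg hR0.le _)
    · exact mul_nonneg (by positivity) (hφnonneg R hR0.le)
  set K : ℝ := max (2/α) (M/c₀) with hK
  have hKpos : 0 < K := lt_of_lt_of_le (by positivity) (le_max_left _ _)
  -- the G bound
  have hGbound : ∀ T : ℝ, R ≤ T → ∀ r : ℝ, r ∈ Set.Icc 1 T →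
      (∫ s in r..T, f s) ≤ K * φ r := by
    intro T hRT r hr
    obtain ⟨hr1, hrT⟩ := hr
    have hφr : 0 ≤ φ r := hφnonneg r (by linarith)
    rcases le_or_gt R r with hcase | hcase
    · calc (∫ s in r..T, f s) ≤ (2/α) * φ r := htail r T hcase hrT
        _ ≤ K * φ r := mul_le_mul_of_nonneg_right (le_max_left _ _) hφr
    · -- r < R ≤ T
      have hsplit : (∫ s in r..R, f s) + (∫ s in R..T, f s) = ∫ s in r..T, f s :=
        integral_add_adjacent_intervals (hfint r R hr1 hcase.le) (hfint R T hR1 hRT)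
      have hpart1 : (∫ s in r..R, f s) ≤ (R - 1) * R ^ |a| := by
        have hb : ∀ x ∈ Set.Icc r R, f x ≤ R ^ |a| := by
          intro x hx
          have hx1 : (1:ℝ) ≤ x := le_trans hr1 hx.1
          have hx0 : (0:ℝ) < x := by linarith
          have hxa : x ^ a ≤ R ^ |a| := by
            rcases le_or_gt 0 a with hc | hc
            · calc x ^ a ≤ R ^ a := Real.rpow_le_rpow hx0.le hx.2 hc
                _ ≤ R ^ |a| := Real.rpow_le_rpow_of_exponent_le hR1 (le_abs_self a)
            · calc x ^ a ≤ 1 := Real.rpow_le_one_of_one_le_of_nonpos hx1 hc.le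
                _ ≤ R ^ |a| := Real.one_le_rpow hR1 (abs_nonneg a)
          have hE1 : E x ≤ 1 := by
            rw [hE]
            apply Real.exp_le_one_iff.mpr
            simp only [neg_nonpos]
            exact Real.rpow_nonneg hx0.le α
          calc f x = x ^ a * E x := rfl
            _ ≤ x ^ a * 1 := by
                apply mul_le_mul_of_nonneg_left hE1 (Real.rpow_nonneg hx0.le a)
            _ = x ^ a := mul_one _
            _ ≤ R ^ |a| := hxa
        calc (∫ s in r..R, f s) ≤ ∫ _ in r..R, R ^ |a| := by
              apply integral_mono_on hcase.le (hfint r R hr1 hcase.le)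
                intervalIntegrable_const hb
          _ = (R - r) * R ^ |a| := by rw [intervalIntegral.integral_const]; simp [smul_eq_mul]
          _ ≤ (R - 1) * R ^ |a| := by
              apply mul_le_mul_of_nonneg_right _ (Real.rpow_nonneg hR0.le _)
              linarith
      have hpart2 : (∫ s in R..T, f s) ≤ (2/α) * φ R := htail R T le_rfl hRT
      have hGM : (∫ s in r..T, f s) ≤ M := by
        rw [← hsplit, hM]; exact add_le_add hpart1 hpart2
      have hc₀φ : c₀ ≤ φ r := by
        rw [hc₀, hφ]
        apply mul_le_mul
        · rcases le_or_gt 0 β with hc | hc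
          · calc min 1 (R ^ β) ≤ 1 := min_le_left _ _
              _ ≤ r ^ β := Real.one_le_rpow hr1 hc
          · calc min 1 (R ^ β) ≤ R ^ β := min_le_right _ _
              _ ≤ r ^ β := Real.rpow_le_rpow_of_nonpos (by linarith) hcase.le hc.le
        · apply Real.exp_le_exp.mpr
          simp only [neg_le_neg_iff]
          exact Real.rpow_le_rpow (by linarith) hcase.le hα0.le
        · exact (Real.exp_pos _).le
        · exact Real.rpow_nonneg (by linarith) β
      calc (∫ s in r..T, f s) ≤ M := hGM
        _ = (M/c₀) * c₀ := by field_simp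
        _ ≤ (M/c₀) * φ r := by
            apply mul_le_mul_of_nonneg_left hc₀φ; positivity
        _ ≤ K * φ r := mul_le_mul_of_nonneg_right (le_max_right _ _) hφr
  -- main part
  refine ⟨4 * K^2, by positivity, ?_⟩
  intro w hw hsupp h0
  have hw' : Differentiable ℝ w := hw.differentiable (by simp)
  have hwc : Continuous w := hw.continuous
  have hdwc : Continuous (deriv w) := hw.continuous_deriv one_le_iy
  have hdw0 : ∀ r : ℝ, r ≤ 1 → deriv w r = 0 := vanish_deriv hw h0
  -- choose T beyond the support
  obtain ⟨T₀, hT₀⟩ := (hsupp.isBounded).subset_closedBall 0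
  set T : ℝ := max R (T₀ + 1) with hT
  have hRT : R ≤ T := le_max_left _ _
  have h1T : (1:ℝ) ≤ T := le_trans hR1 hRT
  have hwT : ∀ r : ℝ, T ≤ r → w r = 0 := by
    intro r hr
    by_contra h
    have : r ∈ tsupport w := subset_tsupport w (by simpa using h)
    have := hT₀ this
    simp only [Metric.mem_closedBall, Real.dist_eq, sub_zero] at this
    have habs : r ≤ T₀ := le_trans (le_abs_self r) this
    have : T₀ + 1 ≤ r := le_trans (le_max_right R (T₀+1)) hr
    linarith
  have hdwT : ∀ r : ℝ, T ≤ r → deriv w r = 0 := by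
    intro r hr
    by_contra h
    have h1 : r ∈ tsupport (deriv w) := subset_tsupport _ (by simpa using h)
    have h2 : r ∈ tsupport w := closure_minimal support_deriv_subset (isClosed_tsupport w) h1
    have := hT₀ h2
    simp only [Metric.mem_closedBall, Real.dist_eq, sub_zero] at this
    have habs : r ≤ T₀ := le_trans (le_abs_self r) this
    have : T₀ + 1 ≤ r := le_trans (le_max_right R (T₀+1)) hr
    linarith
  -- set integrals reduce to interval integrals on [1,T]
  set I : ℝ := ∫ r in (1:ℝ)..T, r ^ a * ‖w r‖ ^ 2 * E r with hI
  set J : ℝ := ∫ r in (1:ℝ)..T, r ^ a' * ‖deriv w r‖ ^ 2 * E r with hJ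
  have hIeq : (∫ r in Set.Ioi (0:ℝ), r ^ a * ‖w r‖ ^ 2 * E r) = I := by
    rw [hI, intervalIntegral.integral_of_le h1T]
    rw [setIntegral_eq_integral_of_forall_compl_eq_zero (s := Set.Ioi (0:ℝ)),
      setIntegral_eq_integral_of_forall_compl_eq_zero (s := Set.Ioc (1:ℝ) T)]
    · intro x hx
      simp only [Set.mem_Ioc, not_and_or, not_lt, not_le] at hx
      rcases hx with hx | hx
      · rw [h0 x hx]; simp
      · rw [hwT x hx.le]; simp
    · intro x hx
      simp only [Set.mem_Ioi, not_lt] at hx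
      rw [h0 x (by linarith)]; simp
  have hJeq : (∫ r in Set.Ioi (0:ℝ), r ^ a' * ‖deriv w r‖ ^ 2 * E r) = J := by
    rw [hJ, intervalIntegral.integral_of_le h1T]
    rw [setIntegral_eq_integral_of_forall_compl_eq_zero (s := Set.Ioi (0:ℝ)),
      setIntegral_eq_integral_of_forall_compl_eq_zero (s := Set.Ioc (1:ℝ) T)]
    · intro x hx
      simp only [Set.mem_Ioc, not_and_or, not_lt, not_le] at hx
      rcases hx with hx | hx
      · rw [hdw0 x hx]; simp
      · rw [hdwT x hx.le]; simp
    · intro x hx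
      simp only [Set.mem_Ioi, not_lt] at hx
      rw [hdw0 x (by linarith)]; simp
  rw [hIeq, hJeq]
  -- define F, F', G
  set F : ℝ → ℝ := fun r => ‖w r‖ ^ 2 with hF
  set F' : ℝ → ℝ := fun r => 2 * ((w r).re * (deriv w r).re + (w r).im * (deriv w r).im) with hF'
  set G : ℝ → ℝ := fun r => ∫ s in r..T, f s with hG
  have hFre : ∀ r : ℝ, F r = (w r).re * (w r).re + (w r).im * (w r).im := by
    intro r
    rw [hF]
    simp only [Complex.sq_norm, Complex.normSq_apply]
  have hFderiv : ∀ r : ℝ, HasDerivAt F (F' r) r := by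
    intro r
    have hd : HasDerivAt w (deriv w r) r := (hw' r).hasDerivAt
    have hre : HasDerivAt (fun x => (w x).re) ((deriv w r).re) r :=
      (Complex.reCLM.hasFDerivAt.comp_hasDerivAt r hd)
    have him : HasDerivAt (fun x => (w x).im) ((deriv w r).im) r :=
      (Complex.imCLM.hasFDerivAt.comp_hasDerivAt r hd)
    have h4 := (hre.mul hre).add (him.mul him)
    have heq : F = fun x => (w x).re * (w x).re + (w x).im * (w x).im := funext hFre
    rw [heq]
    refine h4.congr_deriv ?_
    rw [hF']; ring
  have hFcont : Continuous F' := by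
    rw [hF']
    fun_prop
  have hGderiv : ∀ x : ℝ, x ∈ Set.uIcc 1 T → HasDerivAt G (-(f x)) x := by
    intro x hx
    rw [Set.uIcc_of_le h1T] at hx
    have hx0 : (0:ℝ) < x := by have := hx.1; linarith
    have hint : IntervalIntegrable f volume T x := by
      apply IntervalIntegrable.symm
      exact ((hfcO a).mono (hIoisub x T hx.1 hx.2)).intervalIntegrable
    have hmeas : StronglyMeasurableAtFilter f (nhds x) volume := by
      refine ⟨Set.Ioi 0, Ioi_mem_nhds hx0, ?_⟩
      exact ((hfcO a).mono (le_refl _)).aestronglyMeasurable measurableSet_Ioi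
    have hcont : ContinuousAt f x := by
      have := (hfcO a) x hx0
      exact this.continuousAt (Ioi_mem_nhds hx0)
    have h5 : HasDerivAt (fun u => ∫ s in T..u, f s) (f x) x :=
      intervalIntegral.integral_hasDerivAt_right hint hmeas hcont
    have h6 := h5.neg
    have hGeq : G = fun u => -(∫ s in T..u, f s) := by
      funext u
      show (∫ s in u..T, f s) = -(∫ s in T..u, f s)
      exact intervalIntegral.integral_symm T u
    rw [hGeq]
    exact h6
  -- integration by parts
  have hIBP : (∫ r in (1:ℝ)..T, F r * f r) = ∫ r in (1:ℝ)..T, F' r * G r := by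
    have := intervalIntegral.integral_mul_deriv_eq_deriv_mul
      (u := F) (v := G) (u' := F') (v' := fun r => -(f r))
      (fun x _ => hFderiv x) hGderiv
      (hFcont.intervalIntegrable 1 T)
      (((hfcO a).mono (hIoisub 1 T le_rfl h1T)).neg.intervalIntegrable)
    have hFT : F T = 0 := by rw [hF]; simp [hwT T le_rfl]
    have hF1 : F 1 = 0 := by rw [hF]; simp [h0 1 le_rfl]
    have hGT : G T = 0 := by rw [hG]; simp
    rw [hFT, hF1, hGT] at this
    simp only [mul_zero, zero_mul, sub_zero, zero_sub] at this
    have h7 : (∫ x in (1:ℝ)..T, F x * -(f x)) = -(∫ x in (1:ℝ)..T, F x * f x) := by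
      rw [← intervalIntegral.integral_neg]
      congr 1; funext x; ring
    rw [h7] at this
    linarith [this]
  -- pointwise bound
  have hpoint : ∀ r ∈ Set.Icc (1:ℝ) T, F' r * G r ≤
      (1/2) * (r ^ a * ‖w r‖ ^ 2 * E r) + (2*K^2) * (r ^ a' * ‖deriv w r‖ ^ 2 * E r) := by
    intro r hr
    have hr0 : (0:ℝ) < r := by have := hr.1; linarith
    have hG0 : 0 ≤ G r := by
      rw [hG]
      apply intervalIntegral.integral_nonneg hr.2
      intro s hs
      exact hfnonneg s (by have := hs.1; linarith [hr.1])
    have hGK : G r ≤ K * φ r := hGbound T hRT r hr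
    have hF'le : F' r ≤ 2 * (‖w r‖ * ‖deriv w r‖) := by
      show 2 * ((w r).re * (deriv w r).re + (w r).im * (deriv w r).im) ≤
        2 * (‖w r‖ * ‖deriv w r‖)
      have h1 : ((w r).re * (deriv w r).re + (w r).im * (deriv w r).im) ≤
          ‖w r‖ * ‖deriv w r‖ := by
        have hw2 : ‖w r‖ ^ 2 = (w r).re^2 + (w r).im^2 := by
          simp only [Complex.sq_norm, Complex.normSq_apply]; ring
        have hd2 : ‖deriv w r‖ ^ 2 = (deriv w r).re^2 + (deriv w r).im^2 := by
          simp only [Complex.sq_norm, Complex.normSq_apply]; ring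
        nlinarith [sq_nonneg ((w r).re * (deriv w r).im - (w r).im * (deriv w r).re),
          norm_nonneg (w r), norm_nonneg (deriv w r),
          sq_nonneg (((w r).re * (deriv w r).re + (w r).im * (deriv w r).im) - ‖w r‖ * ‖deriv w r‖),
          mul_nonneg (norm_nonneg (w r)) (norm_nonneg (deriv w r))]
      linarith
    have step1 : F' r * G r ≤ 2 * (‖w r‖ * ‖deriv w r‖) * G r :=
      mul_le_mul_of_nonneg_right hF'le hG0
    have step2 : 2 * (‖w r‖ * ‖deriv w r‖) * G r ≤ 2 * (‖w r‖ * ‖deriv w r‖) * (K * φ r) := by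
      apply mul_le_mul_of_nonneg_left hGK
      positivity
    -- AM-GM
    set x := ‖w r‖ * r ^ (a/2) with hx
    set y := ‖deriv w r‖ * r ^ (a'/2) with hy
    have hab : r ^ (a/2) * r ^ (a'/2) = r ^ β := by
      rw [← Real.rpow_add hr0]
      congr 1
      rw [hβ, ha']; ring
    have hxy : 2 * (‖w r‖ * ‖deriv w r‖) * (K * φ r) = 2 * K * (x * y) * E r := by
      have hφr : φ r = r ^ β * E r := rfl
      rw [hx, hy, hφr, ← hab]; ring
    have hx2 : x^2 = r ^ a * ‖w r‖ ^ 2 := by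
      rw [hx, mul_pow, ← Real.rpow_natCast (r ^ (a/2)) 2, ← Real.rpow_mul hr0.le]
      norm_num
      ring
    have hy2 : y^2 = r ^ a' * ‖deriv w r‖ ^ 2 := by
      rw [hy, mul_pow, ← Real.rpow_natCast (r ^ (a'/2)) 2, ← Real.rpow_mul hr0.le]
      norm_num
      ring
    have hamgm : 2 * K * (x * y) ≤ (1/2) * x^2 + (2*K^2) * y^2 := by
      nlinarith [sq_nonneg (x - 2*K*y)]
    calc F' r * G r ≤ 2 * K * (x * y) * E r := by
          rw [← hxy]; exact le_trans step1 step2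
      _ ≤ ((1/2) * x^2 + (2*K^2) * y^2) * E r :=
          mul_le_mul_of_nonneg_right hamgm (hEpos r).le
      _ = (1/2) * (r ^ a * ‖w r‖ ^ 2 * E r) + (2*K^2) * (r ^ a' * ‖deriv w r‖ ^ 2 * E r) := by
          rw [hx2, hy2]; ring
  -- continuity of G on [1,T]
  have hGcont : ContinuousOn G (Set.uIcc 1 T) := by
    intro x hx
    exact ((hGderiv x hx).continuousAt).continuousWithinAt
  -- integrands continuous
  have hintI : IntervalIntegrable (fun r => r ^ a * ‖w r‖ ^ 2 * E r) volume 1 T := by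
    apply ContinuousOn.intervalIntegrable
    apply ContinuousOn.mul
    · apply ContinuousOn.mul
      · exact (hcO a).mono (hIoisub 1 T le_rfl h1T)
      · exact ((hwc.norm).pow 2).continuousOn
    · exact hEcO.mono (hIoisub 1 T le_rfl h1T)
  have hintJ : IntervalIntegrable (fun r => r ^ a' * ‖deriv w r‖ ^ 2 * E r) volume 1 T := by
    apply ContinuousOn.intervalIntegrable
    apply ContinuousOn.mul
    · apply ContinuousOn.mul
      · exact (hcO a').mono (hIoisub 1 T le_rfl h1T)
      · exact ((hdwc.norm).pow 2).continuousOn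
    · exact hEcO.mono (hIoisub 1 T le_rfl h1T)
  have hintFG : IntervalIntegrable (fun r => F' r * G r) volume 1 T :=
    (hFcont.continuousOn.mul hGcont).intervalIntegrable
  -- chain of inequalities
  have hIFf : I = ∫ r in (1:ℝ)..T, F r * f r := by
    rw [hI]
    apply intervalIntegral.integral_congr
    intro x _
    rw [hF, hf]; ring
  have hImain : I ≤ (1/2) * I + (2*K^2) * J := by
    have hsum : (∫ r in (1:ℝ)..T, ((1/2) * (r ^ a * ‖w r‖ ^ 2 * E r)
        + (2*K^2) * (r ^ a' * ‖deriv w r‖ ^ 2 * E r))) = (1/2) * I + (2*K^2) * J := by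
      rw [intervalIntegral.integral_add (hintI.const_mul _) (hintJ.const_mul _),
        intervalIntegral.integral_const_mul, intervalIntegral.integral_const_mul, hI, hJ]
    calc I = ∫ r in (1:ℝ)..T, F r * f r := hIFf
      _ = ∫ r in (1:ℝ)..T, F' r * G r := hIBP
      _ ≤ ∫ r in (1:ℝ)..T, ((1/2) * (r ^ a * ‖w r‖ ^ 2 * E r)
          + (2*K^2) * (r ^ a' * ‖deriv w r‖ ^ 2 * E r)) := by
          apply integral_mono_on h1T hintFG
            ((hintI.const_mul _).add (hintJ.const_mul _)) hpoint
      _ = (1/2) * I + (2*K^2) * J := hsum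
  linarith [hImain]

/-- Iterated Hardy inequality. -/
lemma iter_step (α : ℝ) (hα : 1 < α) (k : ℕ) : ∀ (a : ℝ),
    ∃ C : ℝ, 0 < C ∧ ∀ w : ℝ → ℂ, ContDiff ℝ (⊤:ℕ∞) w → HasCompactSupport w →
      (∀ r : ℝ, r ≤ 1 → w r = 0) →
      (∫ r in Set.Ioi (0:ℝ), r ^ a * ‖w r‖ ^ 2 * Real.exp (-(r ^ α))) ≤
        C * ∫ r in Set.Ioi (0:ℝ),
          r ^ (a - 2*(k:ℝ)*(α-1)) * ‖deriv^[k] w r‖ ^ 2 * Real.exp (-(r ^ α)) := by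
  induction k with
  | zero =>
    intro a
    refine ⟨1, one_pos, ?_⟩
    intro w _ _ _
    simp
  | succ n ih =>
    intro a
    obtain ⟨C₁, hC₁, h₁⟩ := key_step α hα a
    obtain ⟨C₂, hC₂, h₂⟩ := ih (a - 2*(α-1))
    refine ⟨C₁ * C₂, by positivity, ?_⟩
    intro w hw hsupp h0
    have hdw : ContDiff ℝ (⊤:ℕ∞) (deriv w) := (contDiff_infty_iff_deriv.mp hw).2
    have hdsupp : HasCompactSupport (deriv w) := hsupp.deriv
    have hd0 : ∀ r : ℝ, r ≤ 1 → deriv w r = 0 := vanish_deriv hw h0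
    have step1 := h₁ w hw hsupp h0
    have step2 := h₂ (deriv w) hdw hdsupp hd0
    have hexp : a - 2*(α-1) - 2*(n:ℝ)*(α-1) = a - 2*((n:ℕ)+1:ℝ)*(α-1) := by ring
    have hiter : deriv^[n] (deriv w) = deriv^[n+1] w := by
      rw [Function.iterate_succ_apply]
    rw [hexp, hiter] at step2
    have hcast : ((n+1 : ℕ):ℝ) = ((n:ℕ)+1:ℝ) := by push_cast; ring
    rw [hcast]
    calc (∫ r in Set.Ioi (0:ℝ), r ^ a * ‖w r‖ ^ 2 * Real.exp (-(r ^ α)))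
        ≤ C₁ * ∫ r in Set.Ioi (0:ℝ),
            r ^ (a - 2*(α-1)) * ‖deriv w r‖ ^ 2 * Real.exp (-(r ^ α)) := step1
      _ ≤ C₁ * (C₂ * ∫ r in Set.Ioi (0:ℝ),
            r ^ (a - 2*((n:ℕ)+1:ℝ)*(α-1)) * ‖deriv^[n+1] w r‖ ^ 2 * Real.exp (-(r ^ α))) :=
          mul_le_mul_of_nonneg_left step2 hC₁.le
      _ = (C₁ * C₂) * ∫ r in Set.Ioi (0:ℝ),
            r ^ (a - 2*((n:ℕ)+1:ℝ)*(α-1)) * ‖deriv^[n+1] w r‖ ^ 2 * Real.exp (-(r ^ α)) := by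
          ring

end HardyAux

/-- The radial Hardy-type inequality (2.4). -/
theorem stmt_2 (m N : ℕ) (hm : 1 ≤ m) (hN : 1 ≤ N) :
    ∃ C : ℝ, 0 < C ∧ ∀ w : ℝ → ℂ, ContDiff ℝ (⊤ : ℕ∞) w → HasCompactSupport w →
      (∀ r : ℝ, r ≤ 1 → w r = 0) →
      (∫ r in Set.Ioi (0:ℝ),
          r ^ (N+1) * ‖w r‖ ^ 2 * Real.exp (-(r ^ ((2*(m:ℝ))/(2*(m:ℝ)-1))))) ≤
        C * ∫ r in Set.Ioi (0:ℝ),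
          r ^ (N-1) * ‖(deriv^[2*m-1] w) r‖ ^ 2 *
            Real.exp (-(r ^ ((2*(m:ℝ))/(2*(m:ℝ)-1)))) := by
  set α : ℝ := (2*(m:ℝ))/(2*(m:ℝ)-1) with hαdef
  have hm1 : (1:ℝ) ≤ (m:ℝ) := by exact_mod_cast hm
  have hden : (0:ℝ) < 2*(m:ℝ)-1 := by linarith
  have hα : 1 < α := by
    rw [hαdef, lt_div_iff₀ hden]; linarith
  obtain ⟨C, hC, h⟩ := iter_step α hα (2*m-1) ((N:ℝ)+1)
  refine ⟨C, hC, ?_⟩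
  intro w hw hsupp h0
  have := h w (hw.of_le (by simp)) hsupp h0
  have hNcast : ((N:ℝ)+1) = ((N+1 : ℕ):ℝ) := by push_cast; ring
  have hkcast : ((2*m-1 : ℕ):ℝ) = 2*(m:ℝ)-1 := by
    have : 1 ≤ 2*m := by omega
    push_cast [Nat.cast_sub this]
    ring
  have hexp : (N:ℝ)+1 - 2*((2*m-1 : ℕ):ℝ)*(α-1) = ((N-1 : ℕ):ℝ) := by
    rw [hkcast, hαdef]
    have hN1 : ((N-1:ℕ):ℝ) = (N:ℝ)-1 := by
      push_cast [Nat.cast_sub hN]; ring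
    rw [hN1]
    field_simp
    ring
  rw [hexp] at this
  have hLHS : (fun r : ℝ => r ^ ((N:ℝ)+1) * ‖w r‖ ^ 2 * Real.exp (-(r ^ α)))
      = fun r : ℝ => r ^ (N+1) * ‖w r‖ ^ 2 * Real.exp (-(r ^ α)) := by
    funext r
    rw [hNcast, Real.rpow_natCast]
  have hRHS : (fun r : ℝ => r ^ ((N-1:ℕ):ℝ) * ‖deriv^[2*m-1] w r‖ ^ 2 * Real.exp (-(r ^ α)))
      = fun r : ℝ => r ^ (N-1) * ‖deriv^[2*m-1] w r‖ ^ 2 * Real.exp (-(r ^ α)) := by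
    funext r
    rw [Real.rpow_natCast]
  calc (∫ r in Set.Ioi (0:ℝ), r ^ (N+1) * ‖w r‖ ^ 2 * Real.exp (-(r ^ α)))
      = ∫ r in Set.Ioi (0:ℝ), r ^ ((N:ℝ)+1) * ‖w r‖ ^ 2 * Real.exp (-(r ^ α)) := by
        rw [hLHS]
    _ ≤ C * ∫ r in Set.Ioi (0:ℝ),
          r ^ ((N-1:ℕ):ℝ) * ‖deriv^[2*m-1] w r‖ ^ 2 * Real.exp (-(r ^ α)) := this
    _ = C * ∫ r in Set.Ioi (0:ℝ),
          r ^ (N-1) * ‖deriv^[2*m-1] w r‖ ^ 2 * Real.exp (-(r ^ α)) := by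
        rw [hRHS]
end
end

section
/- Let m ≥ 1, N ≥ 1, k ≥ 0 be integers and let P₀ : ℝ^N → ℂ be a homogeneous polynomial of degree k. Define ψ(y) = Σ_{j=0}^{⌊k/(2m)⌋} (1/j!) (i(-Δ)^m)^j P₀(y) (a finite sum, since (-Δ)^m lowers the degree by 2m). Then ψ is a polynomial eigenfunction of the adjoint rescaled operator: B* ψ ≡ -i(-Δ)^m ψ - (1/(2m)) (y·∇ψ) = -(k/(2m)) ψ on ℝ^N. In particular, for P₀(y) = y^β the polynomials ψ*_β(y) = (1/√(β!)) [ y^β + Σ_{j=1}^{⌊|β|/(2m)⌋} (1/j!) (i(-Δ)^m)^j y^β ] (the generalized Hermite polynomials) satisfy B* ψ*_β = -(|β|/(2m)) ψ*_β. -/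
open MeasureTheory Filter Complex

noncomputable section

/-- The operator `(i(-Δ)^m)^j`. -/
def iLapIter {N : ℕ} (m j : ℕ) (f : Sp N → ℂ) : Sp N → ℂ :=
  (fun g : Sp N → ℂ => fun y => Complex.I * negLapPow m g y)^[j] f

/-- The monomial `y^β`. -/
def monom {N : ℕ} (β : Fin N → ℕ) : Sp N → ℂ := fun y => ∏ i, (y i : ℂ) ^ (β i)

/-!
Everything happens on polynomials. The Euler operator `y · ∇` acts on a homogeneous polynomial of
degree `d` as multiplication by `d`, and `(-Δ)^m` lowers the degree by `2m` (killing the polynomial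
once `2m` exceeds its degree). Hence with `a_j = (1/j!) (i(-Δ)^m)^j P₀` we have
`i(-Δ)^m a_j = (j+1) a_{j+1}`, `y · ∇ a_j = (k - 2mj) a_j` and `a_{⌊k/2m⌋+1} = 0`, so
`B* Σ_j a_j = Σ_j (-j - (k - 2mj)/2m) a_j = -(k/2m) Σ_j a_j`.
-/

open Finset

namespace MvPolynomial

variable {σ R : Type*} [Fintype σ] [CommRing R] {φ : MvPolynomial σ R} {n : ℕ}

def negLaplacian : Module.End R (MvPolynomial σ R) :=
  -∑ i, (pderiv i).toLinearMap ^ 2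

lemma negLaplacian_apply (φ : MvPolynomial σ R) :
    negLaplacian φ = -∑ i, pderiv i (pderiv i φ) := by
  simp [negLaplacian, pow_two]

def eulerOp : Module.End R (MvPolynomial σ R) :=
  ∑ i, LinearMap.mulLeft R (X i) ∘ₗ (pderiv i).toLinearMap

lemma eulerOp_apply (φ : MvPolynomial σ R) : eulerOp φ = ∑ i, X i * pderiv i φ := by
  simp [eulerOp]

lemma IsHomogeneous.negLaplacian (h : φ.IsHomogeneous n) :
    (negLaplacian φ).IsHomogeneous (n - 2) := by
  rw [negLaplacian_apply]
  refine (IsHomogeneous.sum _ _ _ fun i _ => ?_).neg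
  simpa only [Nat.sub_sub] using h.pderiv.pderiv (i := i)

lemma negLaplacian_eq_zero_of_isHomogeneous (h : φ.IsHomogeneous n) (hn : n < 2) :
    negLaplacian φ = 0 := by
  have hconst (i : σ) : pderiv i φ = C ((pderiv i φ).coeff 0) := by
    rw [← totalDegree_eq_zero_iff_eq_C, totalDegree_zero_iff_isHomogeneous]
    simpa [show n - 1 = 0 by omega] using h.pderiv (i := i)
  simp [negLaplacian_apply, fun i => congrArg (pderiv i) (hconst i)]

lemma IsHomogeneous.negLaplacian_pow (h : φ.IsHomogeneous n) (t : ℕ) :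
    ((MvPolynomial.negLaplacian ^ t) φ).IsHomogeneous (n - 2 * t) := by
  induction t generalizing φ n with
  | zero => simpa using h
  | succ t ih =>
    rw [pow_succ, Module.End.mul_apply, mul_add_one, ← Nat.sub_sub, Nat.sub_right_comm]
    exact ih h.negLaplacian

lemma negLaplacian_pow_eq_zero_of_isHomogeneous (h : φ.IsHomogeneous n) {t : ℕ}
    (hn : n < 2 * t) : (negLaplacian ^ t) φ = 0 := by
  induction t generalizing φ n with
  | zero => omega
  | succ t ih =>
    rw [pow_succ, Module.End.mul_apply]
    by_cases hn2 : n < 2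
    · rw [negLaplacian_eq_zero_of_isHomogeneous h hn2, map_zero]
    · exact ih h.negLaplacian (by omega)

lemma IsHomogeneous.eulerOp_negLaplacian_pow (h : φ.IsHomogeneous n) (t : ℕ) :
    eulerOp ((MvPolynomial.negLaplacian ^ t) φ)
      = ((n : R) - 2 * t) • (MvPolynomial.negLaplacian ^ t) φ := by
  by_cases ht : 2 * t ≤ n
  · rw [eulerOp_apply, (h.negLaplacian_pow t).sum_X_mul_pderiv, ← Nat.cast_smul_eq_nsmul R]
    push_cast [ht]
    rfl
  · simp [negLaplacian_pow_eq_zero_of_isHomogeneous h (not_le.mp ht)]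

def bStar (m : ℕ) : Module.End ℂ (MvPolynomial σ ℂ) :=
  -I • negLaplacian ^ m - (1 / (2 * (m : ℂ))) • eulerOp

def hermiteSum (m J : ℕ) : Module.End ℂ (MvPolynomial σ ℂ) :=
  ∑ j ∈ range (J + 1), (j.factorial : ℂ)⁻¹ • (I • negLaplacian ^ m) ^ j

theorem bStar_hermiteSum {m k : ℕ} (hm : m ≠ 0) {φ : MvPolynomial σ ℂ}
    (h : φ.IsHomogeneous k) :
    bStar m (hermiteSum m (k / (2 * m)) φ) = -((k : ℂ) / (2 * m)) • hermiteSum m (k / (2 * m)) φ := by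
  set J := k / (2 * m)
  set a : ℕ → MvPolynomial σ ℂ := fun j => (j.factorial : ℂ)⁻¹ • ((I • negLaplacian ^ m) ^ j) φ
  have hpow (j : ℕ) : ((I • negLaplacian ^ m) ^ j) φ = I ^ j • (negLaplacian ^ (m * j)) φ := by
    rw [smul_pow, pow_mul, LinearMap.smul_apply]
  have ha_succ (j : ℕ) : I • (negLaplacian ^ m) (a j) = ((j : ℂ) + 1) • a (j + 1) := by
    simp only [a, map_smul, smul_smul, pow_succ', Module.End.mul_apply, LinearMap.smul_apply,
      Nat.factorial_succ]
    congr 1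
    push_cast
    field_simp
  have ha_euler (j : ℕ) : eulerOp (a j) = ((k : ℂ) - 2 * m * j) • a j := by
    simp only [a, hpow, map_smul, h.eulerOp_negLaplacian_pow, Nat.cast_mul, mul_assoc]
    module
  have ha_last : a (J + 1) = 0 := by
    have hk : k < 2 * (m * (J + 1)) := by
      simpa only [mul_assoc] using Nat.lt_mul_div_succ k (show 0 < 2 * m by omega)
    simp [a, hpow, negLaplacian_pow_eq_zero_of_isHomogeneous h hk]
  have hsum : hermiteSum m J φ = ∑ j ∈ range (J + 1), a j := by
    simp [hermiteSum, a, LinearMap.sum_apply]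
  have hshift : ∑ j ∈ range (J + 1), ((j : ℂ) + 1) • a (j + 1)
      = ∑ j ∈ range (J + 1), (j : ℂ) • a j := by
    have := sum_range_succ' (fun j => (j : ℂ) • a j) (J + 1)
    rw [sum_range_succ, ha_last] at this
    simpa using this.symm
  rw [bStar, LinearMap.sub_apply, LinearMap.smul_apply, LinearMap.smul_apply, hsum, map_sum,
    map_sum, neg_smul, smul_sum, sum_congr rfl fun j _ => ha_succ j, hshift,
    sum_congr rfl fun j _ => ha_euler j, smul_sum, smul_sum, ← sum_neg_distrib, ← sum_sub_distrib]
  refine sum_congr rfl fun j _ => ?_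
  match_scalars
  field_simp
  ring

end MvPolynomial

open MvPolynomial

def polyFun {N : ℕ} (p : MvPolynomial (Fin N) ℂ) : Sp N → ℂ :=
  fun y => eval (fun i => (y i : ℂ)) p

def coordCLM {N : ℕ} (i : Fin N) : Sp N →L[ℝ] ℂ :=
  ofRealCLM.comp (EuclideanSpace.proj i)

lemma polyFun_smul {N : ℕ} (c : ℂ) (p : MvPolynomial (Fin N) ℂ) (y : Sp N) :
    polyFun (c • p) y = c * polyFun p y :=
  smul_eval _ p c

lemma hasFDerivAt_polyFun {N : ℕ} (p : MvPolynomial (Fin N) ℂ) (y : Sp N) :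
    HasFDerivAt (polyFun p) (∑ i, polyFun (pderiv i p) y • coordCLM i) y := by
  induction p using MvPolynomial.induction_on with
  | C a =>
    rw [show polyFun (C a) = fun _ => a from funext fun _ => eval_C a]
    exact (hasFDerivAt_const a y).congr_fderiv (by ext; simp [polyFun])
  | add p q hp hq =>
    rw [show polyFun (p + q) = polyFun p + polyFun q from funext fun _ => eval_add]
    refine (hp.add hq).congr_fderiv ?_
    ext v
    simp [polyFun, add_mul, sum_add_distrib]
  | mul_X p j hp =>
    rw [show polyFun (p * X j) = polyFun p * fun z => (z j : ℂ) from
      funext fun _ => by simp [polyFun]]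
    refine (hp.mul (coordCLM j).hasFDerivAt).congr_fderiv ?_
    ext v
    simp [polyFun, coordCLM, Pi.single_apply, smul_sum, smul_smul, mul_comm,
      apply_ite (eval fun i => (y i : ℂ)), mul_add, sum_add_distrib]

lemma pd_polyFun {N : ℕ} (i : Fin N) (p : MvPolynomial (Fin N) ℂ) :
    pd i (polyFun p) = polyFun (pderiv i p) := by
  funext y
  simp [pd, (hasFDerivAt_polyFun p y).fderiv, coordCLM, PiLp.single_apply,
    apply_ite (fun r : ℝ => (r : ℂ))]

lemma negLapPow_polyFun {N : ℕ} (m : ℕ) (p : MvPolynomial (Fin N) ℂ) :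
    negLapPow m (polyFun p) = polyFun ((negLaplacian ^ m) p) := by
  induction m with
  | zero => rfl
  | succ m ih =>
    funext y
    rw [negLapPow, Function.iterate_succ_apply', ← negLapPow, ih, pow_succ', Module.End.mul_apply]
    simp [lap, pd_polyFun, polyFun, negLaplacian_apply]

lemma iLapIter_polyFun {N : ℕ} (m j : ℕ) (p : MvPolynomial (Fin N) ℂ) :
    iLapIter m j (polyFun p) = polyFun (((I • negLaplacian ^ m) ^ j) p) := by
  induction j with
  | zero => rfl
  | succ j ih =>
    funext y
    rw [iLapIter, Function.iterate_succ_apply', ← iLapIter, ih, negLapPow_polyFun, pow_succ',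
      Module.End.mul_apply, LinearMap.smul_apply, polyFun_smul]

lemma euler_polyFun {N : ℕ} (p : MvPolynomial (Fin N) ℂ) :
    euler (polyFun p) = polyFun (eulerOp p) := by
  funext y
  simp [euler, pd_polyFun, polyFun, eulerOp_apply]

lemma Bstar_polyFun {N : ℕ} (m : ℕ) (p : MvPolynomial (Fin N) ℂ) :
    Bstar m (polyFun p) = polyFun (bStar m p) := by
  funext y
  simp only [Bstar, bStar, negLapPow_polyFun, euler_polyFun, polyFun, LinearMap.sub_apply,
    LinearMap.smul_apply, map_sub, smul_eval]

lemma polyFun_hermiteSum {N : ℕ} (m J : ℕ) (p : MvPolynomial (Fin N) ℂ) :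
    polyFun (hermiteSum m J p) =
      fun z => ∑ j ∈ range (J + 1), 1 / (j.factorial : ℂ) * iLapIter m j (polyFun p) z := by
  funext z
  simp [hermiteSum, LinearMap.sum_apply, polyFun, smul_eval, iLapIter_polyFun]

lemma Bstar_polyFun_hermiteSum {N m k : ℕ} (hm : m ≠ 0) {p : MvPolynomial (Fin N) ℂ}
    (hp : p.IsHomogeneous k) (y : Sp N) :
    Bstar m (polyFun (hermiteSum m (k / (2 * m)) p)) y
      = -((k : ℂ) / (2 * m)) * polyFun (hermiteSum m (k / (2 * m)) p) y := by
  rw [Bstar_polyFun, bStar_hermiteSum hm hp, polyFun_smul]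

theorem stmt_8_general (m N k : ℕ) (hm : 1 ≤ m)
    (P₀ : MvPolynomial (Fin N) ℂ) (hP : P₀.IsHomogeneous k) :
    (∀ y : Sp N,
      Bstar m (fun z : Sp N => ∑ j ∈ Finset.range (k/(2*m) + 1),
          (1/(Nat.factorial j : ℂ)) *
            iLapIter m j (fun w => MvPolynomial.eval (fun i => ((w i : ℝ) : ℂ)) P₀) z) y
        = -((k:ℂ)/(2*(m:ℂ))) * ∑ j ∈ Finset.range (k/(2*m) + 1),
            (1/(Nat.factorial j : ℂ)) *
              iLapIter m j (fun w => MvPolynomial.eval (fun i => ((w i : ℝ) : ℂ)) P₀) y)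
    ∧
    (∀ β : Fin N → ℕ, ∀ y : Sp N,
      Bstar m (fun z : Sp N =>
          (((Real.sqrt ((∏ i, Nat.factorial (β i) : ℕ) : ℝ) : ℝ) : ℂ))⁻¹ *
            (monom β z + ∑ j ∈ Finset.Icc 1 ((∑ i, β i)/(2*m)),
              (1/(Nat.factorial j : ℂ)) * iLapIter m j (monom β) z)) y
        = -((((∑ i, β i : ℕ)) : ℂ)/(2*(m:ℂ))) *
            ((((Real.sqrt ((∏ i, Nat.factorial (β i) : ℕ) : ℝ) : ℝ) : ℂ))⁻¹ *
              (monom β y + ∑ j ∈ Finset.Icc 1 ((∑ i, β i)/(2*m)),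
                (1/(Nat.factorial j : ℂ)) * iLapIter m j (monom β) y))) := by
  have hm0 : m ≠ 0 := by omega
  refine ⟨fun y => ?_, fun β y => ?_⟩
  · have h := Bstar_polyFun_hermiteSum hm0 hP y
    rw [polyFun_hermiteSum] at h
    exact h
  · set c : ℂ := ((Real.sqrt ((∏ i, Nat.factorial (β i) : ℕ) : ℝ) : ℝ) : ℂ)
    set J := (∑ i, β i) / (2 * m)
    have hmonom : monom β = polyFun (∏ i, X i ^ β i) := funext fun z => by simp [monom, polyFun]
    have hψ : polyFun (hermiteSum m J (C c⁻¹ * ∏ i, X i ^ β i)) = fun z =>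
        c⁻¹ * (monom β z + ∑ j ∈ Icc 1 J, 1 / (j.factorial : ℂ) * iLapIter m j (monom β) z) := by
      funext z
      rw [C_mul', map_smul, polyFun_smul, polyFun_hermiteSum, ← hmonom]
      beta_reduce
      rw [sum_range_eq_add_Ico _ (show 0 < J + 1 from J.succ_pos), Ico_add_one_right_eq_Icc]
      simp [iLapIter]
    have hp : (C c⁻¹ * ∏ i, X i ^ β i).IsHomogeneous (∑ i, β i) :=
      (IsHomogeneous.prod _ _ _ fun i _ => isHomogeneous_X_pow i (β i)).C_mul _
    have h := Bstar_polyFun_hermiteSum hm0 hp y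
    rw [hψ] at h
    exact h

/-- Lemma 4.1(i): for a homogeneous polynomial `P₀` of degree `k`,
`ψ = Σ_{j=0}^{⌊k/2m⌋} (1/j!)(i(-Δ)^m)^j P₀` satisfies `B* ψ = -(k/2m) ψ`; in particular the
generalized Hermite polynomials `ψ*_β` satisfy `B* ψ*_β = -(|β|/2m) ψ*_β`. -/
theorem stmt_8 (m N k : ℕ) (hm : 1 ≤ m) (hN : 1 ≤ N)
    (P₀ : MvPolynomial (Fin N) ℂ) (hP : P₀.IsHomogeneous k) :
    (∀ y : Sp N,
      Bstar m (fun z : Sp N => ∑ j ∈ Finset.range (k/(2*m) + 1),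
          (1/(Nat.factorial j : ℂ)) *
            iLapIter m j (fun w => MvPolynomial.eval (fun i => ((w i : ℝ) : ℂ)) P₀) z) y
        = -((k:ℂ)/(2*(m:ℂ))) * ∑ j ∈ Finset.range (k/(2*m) + 1),
            (1/(Nat.factorial j : ℂ)) *
              iLapIter m j (fun w => MvPolynomial.eval (fun i => ((w i : ℝ) : ℂ)) P₀) y)
    ∧
    (∀ β : Fin N → ℕ, ∀ y : Sp N,
      Bstar m (fun z : Sp N =>
          (((Real.sqrt ((∏ i, Nat.factorial (β i) : ℕ) : ℝ) : ℝ) : ℂ))⁻¹ *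
            (monom β z + ∑ j ∈ Finset.Icc 1 ((∑ i, β i)/(2*m)),
              (1/(Nat.factorial j : ℂ)) * iLapIter m j (monom β) z)) y
        = -((((∑ i, β i : ℕ)) : ℂ)/(2*(m:ℂ))) *
            ((((Real.sqrt ((∏ i, Nat.factorial (β i) : ℕ) : ℝ) : ℝ) : ℂ))⁻¹ *
              (monom β y + ∑ j ∈ Finset.Icc 1 ((∑ i, β i)/(2*m)),
                (1/(Nat.factorial j : ℂ)) * iLapIter m j (monom β) y))) :=
  stmt_8_general m N k hm P₀ hP
end
end

section
/- Let N ≥ 1 be an integer and n > 0 a real number. Set α₀ = N/(2+Nn), β = (1 - α₀ n)/2 = 1/(2+Nn), κ = (2/(2+Nn))^{1/n}, and define f : ℝ^N → ℂ by f(y) = κ e^{i|y|²/4}. Then f is an explicit nonlinear eigenfunction of the forward self-similar problem for the quasilinear Schrödinger equation with m = 1: it satisfies i Δ(|f|^n f) + β (y·∇f) + α₀ f = 0 on ℝ^N. -/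
open MeasureTheory Filter Complex

noncomputable section

/-- The amplitude `κ = (2/(2+Nn))^{1/n}`. -/
def kappa (N : ℕ) (n : ℝ) : ℝ := (2/(2+(N:ℝ)*n)) ^ (1/n)

/-- The explicit profile `f(y) = κ e^{i|y|²/4}`. -/
def fprof (N : ℕ) (n : ℝ) : Sp N → ℂ :=
  fun y => ((kappa N n : ℝ) : ℂ) * Complex.exp (Complex.I * ((‖y‖ ^ 2 : ℝ) : ℂ) / 4)

/-!
Since `|f| ≡ κ` and `κ ^ n = 2 / (2 + N n)`, the nonlinearity `|f|^n f` is the constant multiple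
`2 / (2 + N n)` of `f`. Both are Gaussians `c exp (b |y|²)` with `b = i/4`, on which `Δ` and `y · ∇`
act as multiplication by `4 b² |y|² + 2 N b` and `2 b |y|²`; with `β = 1 / (2 + N n)` the equation
then reduces to `i² = -1`.
-/

section PartialDerivatives

variable {N : ℕ}

lemma pd_apply_of_hasFDerivAt {f : Sp N → ℂ} {f' : Sp N →L[ℝ] ℂ} {y : Sp N}
    (h : HasFDerivAt f f' y) (i : Fin N) : pd i f y = f' (EuclideanSpace.single i 1) := by
  rw [pd, h.fderiv]

lemma pd_mul {f g : Sp N → ℂ} {y : Sp N} (hf : DifferentiableAt ℝ f y)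
    (hg : DifferentiableAt ℝ g y) (i : Fin N) :
    pd i (fun z => f z * g z) y = pd i f y * g y + f y * pd i g y := by
  simp only [pd, fderiv_fun_mul hf hg, add_apply, smul_apply, smul_eq_mul]
  ring

lemma hasFDerivAt_const_mul_coord (a : ℂ) (i : Fin N) (y : Sp N) :
    HasFDerivAt (fun z : Sp N => a * (z i : ℂ)) (a • ofRealCLM.comp (EuclideanSpace.proj i)) y :=
  (a • ofRealCLM.comp (EuclideanSpace.proj (𝕜 := ℝ) i)).hasFDerivAt

lemma pd_const_mul_coord (a : ℂ) (i : Fin N) (y : Sp N) :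
    pd i (fun z => a * (z i : ℂ)) y = a := by
  rw [pd_apply_of_hasFDerivAt (hasFDerivAt_const_mul_coord a i y)]
  simp

lemma ofReal_norm_sq_eq_sum (y : Sp N) : ((‖y‖ ^ 2 : ℝ) : ℂ) = ∑ i, ((y i : ℝ) : ℂ) ^ 2 := by
  simp [EuclideanSpace.real_norm_sq_eq]

end PartialDerivatives

section Gaussian

variable {N : ℕ}

def gaussian (c b : ℂ) : Sp N → ℂ :=
  fun z => c * cexp (b * ((‖z‖ ^ 2 : ℝ) : ℂ))

lemma norm_gaussian (c b : ℂ) (z : Sp N) :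
    ‖gaussian c b z‖ = ‖c‖ * Real.exp (b.re * ‖z‖ ^ 2) := by
  rw [gaussian, norm_mul, norm_exp, re_mul_ofReal]

lemma hasFDerivAt_gaussian (c b : ℂ) (y : Sp N) :
    HasFDerivAt (gaussian c b) ((2 * b * gaussian c b y) • ofRealCLM.comp (innerSL ℝ y)) y := by
  refine (((ofRealCLM.hasFDerivAt.comp y (hasStrictFDerivAt_norm_sq y).hasFDerivAt).const_mul
    b).cexp.const_mul c).congr_fderiv ?_
  ext v
  simp only [gaussian, Function.comp_apply, ofRealCLM_apply, ofReal_pow,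
    ContinuousLinearMap.comp_smul, smul_apply, ContinuousLinearMap.comp_apply, coe_innerSL_apply,
    nsmul_eq_mul, Nat.cast_ofNat, smul_eq_mul]
  ring

lemma pd_gaussian (c b : ℂ) (i : Fin N) :
    pd i (gaussian c b) = fun z => gaussian c b z * (2 * b * z i) := by
  funext z
  rw [pd_apply_of_hasFDerivAt (hasFDerivAt_gaussian c b z)]
  simp only [smul_apply, ContinuousLinearMap.comp_apply, coe_innerSL_apply,
    EuclideanSpace.inner_single_right, Real.ringHom_apply, one_mul, ofRealCLM_apply, smul_eq_mul]
  ring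

lemma lap_gaussian (c b : ℂ) (y : Sp N) :
    lap (gaussian c b) y = gaussian c b y * (4 * b ^ 2 * ((‖y‖ ^ 2 : ℝ) : ℂ) + 2 * N * b) := by
  have hd : Differentiable ℝ (gaussian (N := N) c b) :=
    fun z => (hasFDerivAt_gaussian c b z).differentiableAt
  have hcoord (i : Fin N) : Differentiable ℝ (fun z : Sp N => 2 * b * (z i : ℂ)) :=
    fun z => (hasFDerivAt_const_mul_coord _ i z).differentiableAt
  simp only [lap, pd_gaussian, pd_mul (hd y) (hcoord _ y), pd_const_mul_coord,
    ofReal_norm_sq_eq_sum, Finset.mul_sum]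
  rw [Finset.sum_add_distrib, Finset.sum_const, Finset.card_univ, Fintype.card_fin, nsmul_eq_mul,
    mul_add, Finset.mul_sum]
  congr 1
  · exact Finset.sum_congr rfl fun i _ => by ring
  · ring

lemma euler_gaussian (c b : ℂ) (y : Sp N) :
    euler (gaussian c b) y = gaussian c b y * (2 * b * ((‖y‖ ^ 2 : ℝ) : ℂ)) := by
  simp only [euler, pd_gaussian, ofReal_norm_sq_eq_sum, Finset.mul_sum]
  exact Finset.sum_congr rfl fun i _ => by ring

end Gaussian

section Profile

variable (N : ℕ) {n : ℝ}

lemma fprof_eq_gaussian (n : ℝ) : fprof N n = gaussian (kappa N n) (I / 4) := by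
  funext z
  simp only [fprof, gaussian]
  ring_nf

lemma kappa_rpow (hn : 0 < n) : kappa N n ^ n = 2 / (2 + N * n) := by
  rw [kappa, ← Real.rpow_mul (by positivity), one_div_mul_cancel hn.ne', Real.rpow_one]

lemma norm_fprof (hn : 0 < n) (z : Sp N) : ‖fprof N n z‖ = kappa N n := by
  have hκ : 0 < kappa N n := Real.rpow_pos_of_pos (by positivity) _
  simp [fprof_eq_gaussian, norm_gaussian, abs_of_pos hκ]

lemma norm_rpow_mul_fprof_eq_gaussian (hn : 0 < n) :
    (fun z => ((‖fprof N n z‖ ^ n : ℝ) : ℂ) * fprof N n z)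
      = gaussian (((2 / (2 + N * n) : ℝ) : ℂ) * kappa N n) (I / 4) := by
  funext z
  rw [norm_fprof N hn, kappa_rpow N hn, fprof_eq_gaussian]
  simp only [gaussian, mul_assoc]

end Profile

theorem stmt_19_general (N : ℕ) (n : ℝ) (hn : 0 < n) (y : Sp N) :
    Complex.I * lap (fun z : Sp N => ((‖fprof N n z‖ ^ n : ℝ) : ℂ) * fprof N n z) y
      + (((1 - ((N:ℝ)/(2+(N:ℝ)*n)) * n)/2 : ℝ) : ℂ) * euler (fprof N n) y
      + (((N:ℝ)/(2+(N:ℝ)*n) : ℝ) : ℂ) * fprof N n y = 0 := by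
  have hd : 2 + (N : ℝ) * n ≠ 0 := by positivity
  have hβ : (1 - (N : ℝ) / (2 + N * n) * n) / 2 = 1 / (2 + N * n) := by
    field_simp
    ring
  rw [norm_rpow_mul_fprof_eq_gaussian N hn, fprof_eq_gaussian, lap_gaussian, euler_gaussian, hβ]
  simp only [gaussian]
  push_cast
  linear_combination (2 / (2 + N * n) * kappa N n * cexp (I / 4 * ‖y‖ ^ 2)
    * (I * ‖y‖ ^ 2 / 4 + N / 2)) * I_sq

/-- The explicit nonlinear eigenfunction of the forward self-similar problem for the
quasilinear Schrödinger equation with `m = 1`: `iΔ(|f|^n f) + β y·∇f + α₀ f = 0` with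
`α₀ = N/(2+Nn)`, `β = (1-α₀ n)/2 = 1/(2+Nn)`. -/
theorem stmt_19 (N : ℕ) (hN : 1 ≤ N) (n : ℝ) (hn : 0 < n) (y : Sp N) :
    Complex.I * lap (fun z : Sp N => ((‖fprof N n z‖ ^ n : ℝ) : ℂ) * fprof N n z) y
      + (((1 - ((N:ℝ)/(2+(N:ℝ)*n)) * n)/2 : ℝ) : ℂ) * euler (fprof N n) y
      + (((N:ℝ)/(2+(N:ℝ)*n) : ℝ) : ℂ) * fprof N n y = 0 :=
  stmt_19_general N n hn y
end
end
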